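/- Let M be a number field and let v be a finite place of M lying above a prime number p, with ramification index e and residue degree f over p. Let β ∈ M be a nonzero element such that v(β) ≠ 0 and w(β) = 0 for every finite place w ≠ v of M. Then the degree [M : ℚ(β)] divides e·f. In particular, if e·f is coprime to [M : ℚ], then ℚ(β) = M. -/

import Mathlib

/-!
One of `β`, `β⁻¹` is an algebraic integer `γ` whose only prime divisor in `𝓞 M` is `v`.
Since `γ` lies in `K = ℚ(β)`, the prime `u = v ∩ 𝓞 K` has `v` as the only prime of `𝓞 M` above
it, so the fundamental identity reads `[M : K] = e(v | u) f(v | u)`; by multiplicativity in the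
tower `ℤ ⊆ 𝓞 K ⊆ 𝓞 M` these factors divide `e = e(v | p)` and `f = f(v | p)`.
-/

open NumberField IsDedekindDomain

namespace Ideal

theorem finrank_eq_ramificationIdx_mul_inertiaDeg_of_primesOver_eq_singleton
    {R S : Type*} [CommRing R] [IsDomain R] [CommRing S] [Algebra R S]
    [Module.Finite R S] [Module.Flat R S]
    {p : Ideal R} [p.IsPrime] {P : Ideal S} (h : p.primesOver S = {P}) :
    Module.finrank R S = P.ramificationIdx R * P.inertiaDeg R := by
  let : Fintype (p.primesOver S) := (h ▸ Set.finite_singleton P).fintype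
  have hP : P ∈ p.primesOver S := h ▸ rfl
  rw [← sum_ramification_inertia_eq_finrank p S, Fintype.sum_eq_single ⟨P, hP⟩]
  rintro ⟨q, hq⟩ hne
  exact absurd (Subtype.ext (Set.mem_singleton_iff.mp (h ▸ hq))) hne

end Ideal

namespace IsDedekindDomain.HeightOneSpectrum

section Valuation

variable {R K : Type*} [CommRing R] [IsDedekindDomain R] [Field K] [Algebra R K]
  [IsFractionRing R K]

theorem exists_algebraMap_eq_of_valuation_lt_one (v : HeightOneSpectrum R) {x : K}
    (hv : v.valuation K x < 1) (hw : ∀ w ≠ v, w.valuation K x = 1) :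
    ∃ r : R, algebraMap R K r = x ∧ r ∈ v.asIdeal ∧ ∀ w ≠ v, r ∉ w.asIdeal := by
  obtain ⟨r, rfl⟩ := mem_integers_of_valuation_le_one K x fun w ↦
    (eq_or_ne w v).elim (· ▸ hv.le) (hw w · |>.le)
  refine ⟨r, rfl, (v.valuation_lt_one_iff_mem r).mp hv, fun w hwv hr ↦ ?_⟩
  exact ((w.valuation_lt_one_iff_mem r).mpr hr).ne (hw w hwv)

theorem exists_algebraMap_eq_or_inv_of_valuation_ne_one (v : HeightOneSpectrum R) {x : K}
    (hv : v.valuation K x ≠ 1) (hw : ∀ w ≠ v, w.valuation K x = 1) :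
    ∃ r : R, (algebraMap R K r = x ∨ algebraMap R K r = x⁻¹) ∧
      r ∈ v.asIdeal ∧ ∀ w ≠ v, r ∉ w.asIdeal := by
  rcases hv.lt_or_gt with hlt | hgt
  · obtain ⟨r, hr, hrv, hrw⟩ := v.exists_algebraMap_eq_of_valuation_lt_one hlt hw
    exact ⟨r, .inl hr, hrv, hrw⟩
  · obtain ⟨r, hr, hrv, hrw⟩ := v.exists_algebraMap_eq_of_valuation_lt_one (x := x⁻¹)
      (by rw [map_inv₀]; exact inv_lt_one_of_one_lt₀ hgt)
      (fun w hwv ↦ by rw [map_inv₀, hw w hwv, inv_one])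
    exact ⟨r, .inr hr, hrv, hrw⟩

end Valuation

theorem primesOver_under_eq_singleton {R S : Type*} [CommRing R] [CommRing S] [Algebra R S]
    [FaithfulSMul R S] (P : HeightOneSpectrum S) {r : R} (hr : r ≠ 0)
    (hrP : algebraMap R S r ∈ P.asIdeal) (hrQ : ∀ Q ≠ P, algebraMap R S r ∉ Q.asIdeal) :
    (P.asIdeal.under R).primesOver S = {P.asIdeal} := by
  refine Set.eq_singleton_iff_unique_mem.mpr ⟨⟨P.isPrime, ⟨rfl⟩⟩, ?_⟩
  rintro q ⟨hq, hqP⟩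
  have hrq : r ∈ q.under R := hqP.over ▸ hrP
  have hq0 : q ≠ ⊥ := fun h ↦ hr <| (FaithfulSMul.algebraMap_injective R S).eq_iff.mp <| by
    rw [map_zero, ← Ideal.mem_bot, ← h]
    exact hrq
  by_contra hne
  exact hrQ ⟨q, hq, hq0⟩ (fun h ↦ hne (congrArg asIdeal h)) hrq

end IsDedekindDomain.HeightOneSpectrum

theorem IntermediateField.eq_top_of_finrank_dvd_of_coprime {F E : Type*} [Field F] [Field E]
    [Algebra F E] {K : IntermediateField F E} {n : ℕ} (hK : Module.finrank K E ∣ n)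
    (hn : n.Coprime (Module.finrank F E)) : K = ⊤ :=
  finrank_eq_one_iff_eq_top.mp <| Nat.eq_one_of_dvd_coprimes hn hK
    (Dvd.intro_left _ (Module.finrank_mul_finrank F K E))

namespace NumberField

theorem RingOfIntegers.exists_algebraMap_eq_of_algebraMap_eq {K M : Type*} [Field K] [Field M]
    [Algebra K M] {x : 𝓞 M} {y : K} (h : algebraMap K M y = x) :
    ∃ z : 𝓞 K, algebraMap (𝓞 K) (𝓞 M) z = x :=
  ⟨⟨y, (isIntegral_algebraMap_iff (algebraMap K M).injective).mp (h ▸ x.isIntegral_coe)⟩,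
    RingOfIntegers.ext h⟩

variable {K M : Type*} [Field K] [NumberField K] [Field M] [NumberField M] [Algebra K M]

theorem finrank_eq_ramificationIdx_mul_inertiaDeg_of_unique_prime
    (P : HeightOneSpectrum (𝓞 M)) {r : 𝓞 K} (hr : r ≠ 0)
    (hrP : algebraMap (𝓞 K) (𝓞 M) r ∈ P.asIdeal)
    (hrQ : ∀ Q ≠ P, algebraMap (𝓞 K) (𝓞 M) r ∉ Q.asIdeal) :
    Module.finrank K M = P.asIdeal.ramificationIdx (𝓞 K) * P.asIdeal.inertiaDeg (𝓞 K) := by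
  rw [IsFractionRing.finrank_eq (𝓞 K) K (𝓞 M) M]
  exact Ideal.finrank_eq_ramificationIdx_mul_inertiaDeg_of_primesOver_eq_singleton
    (P.primesOver_under_eq_singleton hr hrP hrQ)

theorem finrank_dvd_ramificationIdx_mul_inertiaDeg_of_unique_prime
    (P : HeightOneSpectrum (𝓞 M)) {r : 𝓞 K} (hr : r ≠ 0)
    (hrP : algebraMap (𝓞 K) (𝓞 M) r ∈ P.asIdeal)
    (hrQ : ∀ Q ≠ P, algebraMap (𝓞 K) (𝓞 M) r ∉ Q.asIdeal) :
    Module.finrank K M ∣ P.asIdeal.ramificationIdx ℤ * P.asIdeal.inertiaDeg ℤ := by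
  rw [finrank_eq_ramificationIdx_mul_inertiaDeg_of_unique_prime P hr hrP hrQ]
  exact mul_dvd_mul (Ideal.ramificationIdx_above_dvd (P.asIdeal.under (𝓞 K)) P.asIdeal)
    (Ideal.inertiaDeg_above_dvd (P.asIdeal.under (𝓞 K)) P.asIdeal)

end NumberField

/-- Let `M` be a number field and `v` a finite place of `M` above a
prime `p`, with ramification index `e` and residue degree `f` over `p`. Let `β ∈ M` be a
nonzero element such that `v(β) ≠ 0` and `w(β) = 0` for every finite place `w ≠ v`.
Then `[M : ℚ(β)]` divides `e * f`; in particular if `e * f` is coprime to `[M : ℚ]`,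
then `ℚ(β) = M`. -/
theorem degree_dvd_of_single_place_valuation
    (M : Type*) [Field M] [NumberField M]
    (p : ℕ) (hp : p.Prime)
    (v : HeightOneSpectrum (𝓞 M)) (hv : (p : 𝓞 M) ∈ v.asIdeal)
    (e f : ℕ)
    (he : e = Ideal.ramificationIdx' (Ideal.span {(p : ℤ)}) v.asIdeal)
    (hf : f = Ideal.inertiaDeg' (Ideal.span {(p : ℤ)}) v.asIdeal)
    (β : M) (hβ : β ≠ 0)
    (hvβ : v.valuation M β ≠ 1)
    (hwβ : ∀ w : HeightOneSpectrum (𝓞 M), w ≠ v → w.valuation M β = 1) :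
    Module.finrank (IntermediateField.adjoin ℚ ({β} : Set M)) M ∣ e * f ∧
      (Nat.Coprime (e * f) (Module.finrank ℚ M) →
        IntermediateField.adjoin ℚ ({β} : Set M) = ⊤) := by
  set K := IntermediateField.adjoin ℚ ({β} : Set M)
  obtain ⟨γ, hγβ, hγv, hγw⟩ := v.exists_algebraMap_eq_or_inv_of_valuation_ne_one hvβ hwβ
  have hγK : algebraMap (𝓞 M) M γ ∈ K := by
    have hβK : β ∈ K := IntermediateField.mem_adjoin_simple_self ℚ β
    rcases hγβ with h | h <;> rw [h]
    exacts [hβK, inv_mem hβK]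
  obtain ⟨r, rfl⟩ :=
    RingOfIntegers.exists_algebraMap_eq_of_algebraMap_eq (x := γ) (y := (⟨γ, hγK⟩ : K)) rfl
  have hr0 : r ≠ 0 := by
    rintro rfl
    rcases hγβ with h | h <;> simp only [map_zero] at h
    exacts [hβ h.symm, inv_ne_zero hβ h.symm]
  have hpZ : Prime (p : ℤ) := Nat.prime_iff_prime_int.mp hp
  have : v.asIdeal.LiesOver (Ideal.span {(p : ℤ)}) :=
    (Ideal.liesOver_span_iff v.isPrime.ne_top hpZ).mpr (by simpa using hv)
  have : (Ideal.span {(p : ℤ)}).IsMaximal := hpZ.isMaximal_span_singleton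
  have hdvd : Module.finrank K M ∣ e * f := by
    rw [he, hf, Ideal.ramificationIdx'_eq_ramificationIdx _ _ (by simpa using hp.ne_zero),
      Ideal.inertiaDeg'_eq_inertiaDeg]
    exact finrank_dvd_ramificationIdx_mul_inertiaDeg_of_unique_prime v hr0 hγv hγw
  exact ⟨hdvd, IntermediateField.eq_top_of_finrank_dvd_of_coprime hdvd⟩
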